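/- arXiv:2204.12878 — 7 statements merged into one kernel-verified Lean document; each statement's English description precedes it below -/
import Mathlib

section
/- If x : I × [0,T] → ℝ² is a smooth solution of x_tt + β x_t = (1/|x_ρ|)(x_ρ/|x_ρ|)_ρ − (x_t · τ_t)τ with initial condition x_t(·,0) = V₀ ν(·,0) (so that x_t(·,0)·τ(·,0) = 0), where τ = x_ρ/|x_ρ| and |x_ρ| > 0, then x_t · τ = 0 on all of I × [0,T], i.e. x is a normal parameterization. -/
open scoped RealInnerProductSpace
open Set

noncomputable section

abbrev E2 := EuclideanSpace ℝ (Fin 2)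

/-- Clockwise rotation through π/2. -/
def rot (v : E2) : E2 := (WithLp.equiv 2 (Fin 2 → ℝ)).symm ![v 1, -v 0]

/-- a smooth solution of the hyperbolic curvature flow system
`x_tt + β x_t = (1/|x_ρ|)(x_ρ/|x_ρ|)_ρ − (x_t·τ_t)τ` with normal initial velocity
`x_t(·,0) = V₀ ν(·,0)` is a normal parameterization: `x_t · τ = 0` on I × [0,T]. -/
theorem normal_parameterization
    (T β : ℝ) (hT : 0 < T) (hβ : 0 ≤ β)
    (x xρ xt xtt τ τt τρ : ℝ → ℝ → E2) (V₀ : ℝ → ℝ)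
    (hsmooth : ContDiff ℝ (⊤ : ℕ∞) (fun p : ℝ × ℝ => x p.1 p.2))
    (hper : ∀ ρ t, x (ρ + 1) t = x ρ t)
    (hxρ : ∀ ρ t, HasDerivAt (fun ρ' => x ρ' t) (xρ ρ t) ρ)
    (hxt : ∀ ρ t, HasDerivAt (fun t' => x ρ t') (xt ρ t) t)
    (hxtt : ∀ ρ t, HasDerivAt (fun t' => xt ρ t') (xtt ρ t) t)
    (hpos : ∀ ρ t, 0 < ‖xρ ρ t‖)
    (hτ : ∀ ρ t, τ ρ t = ‖xρ ρ t‖⁻¹ • xρ ρ t)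
    (hτt : ∀ ρ t, HasDerivAt (fun t' => τ ρ t') (τt ρ t) t)
    (hτρ : ∀ ρ t, HasDerivAt (fun ρ' => τ ρ' t) (τρ ρ t) ρ)
    (hpde : ∀ ρ, ∀ t ∈ Icc (0:ℝ) T,
      xtt ρ t + β • xt ρ t
        = ‖xρ ρ t‖⁻¹ • τρ ρ t - ⟪xt ρ t, τt ρ t⟫ • τ ρ t)
    (hinit : ∀ ρ, xt ρ 0 = V₀ ρ • rot (τ ρ 0)) :
    ∀ ρ, ∀ t ∈ Icc (0:ℝ) T, ⟪xt ρ t, τ ρ t⟫ = 0 := by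
   
  intro ρ t ht
  have hτnorm : ∀ r s, ⟪τ r s, τ r s⟫ = 1 := by
    intro r s
    rw [real_inner_self_eq_norm_sq, hτ, norm_smul, norm_inv, norm_norm,
      inv_mul_cancel₀ (hpos r s).ne']
    norm_num
  have hττρ : ∀ r s, ⟪τρ r s, τ r s⟫ = 0 := by
    intro r s
    have h1 := ((hτρ r s).inner ℝ (hτρ r s))
    have h2 : (fun r' => ⟪τ r' s, τ r' s⟫) = fun _ => (1:ℝ) :=
      funext fun r' => hτnorm r' s
    rw [h2] at h1
    have h3 := h1.unique (hasDerivAt_const r 1)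
    rw [real_inner_comm (τ r s) (τρ r s)] at h3
    rw [real_inner_comm]
    linarith
  set f : ℝ → ℝ := fun s => ⟪xt ρ s, τ ρ s⟫ with hfdef
  have hf0 : f 0 = 0 := by
    simp only [hfdef, hinit ρ, inner_smul_left]
    have : ⟪rot (τ ρ 0), τ ρ 0⟫ = 0 := by
      simp [rot, PiLp.inner_apply, Fin.sum_univ_two, WithLp.equiv_symm_apply, PiLp.toLp_apply,
        Matrix.cons_val_zero, Matrix.cons_val_one, Matrix.head_cons]
      ring
    simp [this]
  have hfderiv : ∀ s ∈ Icc (0:ℝ) T, HasDerivAt f (-β * f s) s := by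
    intro s hs
    have h1 := (hxtt ρ s).inner ℝ (hτt ρ s)
    have hx : xtt ρ s = ‖xρ ρ s‖⁻¹ • τρ ρ s - ⟪xt ρ s, τt ρ s⟫ • τ ρ s - β • xt ρ s := by
      have := hpde ρ s hs
      linear_combination (norm := module) this
    have hval : ⟪xt ρ s, τt ρ s⟫ + ⟪xtt ρ s, τ ρ s⟫ = -β * f s := by
      rw [hx]
      simp only [inner_sub_left, inner_smul_left, conj_trivial, hττρ, hτnorm, hfdef]
      ring
    rw [hval] at h1
    exact h1
  set g : ℝ → ℝ := fun s => Real.exp (β * s) * f s with hgdef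
  have hgderiv : ∀ s ∈ Icc (0:ℝ) T, HasDerivWithinAt g 0 (Icc (0:ℝ) T) s := by
    intro s hs
    have he : HasDerivAt (fun u => Real.exp (β * u)) (Real.exp (β * s) * β) s := by
      simpa using ((hasDerivAt_id s).const_mul β).exp
    have := he.mul (hfderiv s hs)
    have h0 : Real.exp (β * s) * β * f s + Real.exp (β * s) * (-β * f s) = 0 := by ring
    rw [h0] at this
    exact this.hasDerivWithinAt
  have hconv : Convex ℝ (Icc (0:ℝ) T) := convex_Icc _ _
  have h0mem : (0:ℝ) ∈ Icc (0:ℝ) T := ⟨le_refl _, hT.le⟩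
  have hbound : ∀ s ∈ Icc (0:ℝ) T, ‖(0:ℝ)‖ ≤ 0 := by simp
  have := Convex.norm_image_sub_le_of_norm_hasDerivWithin_le
    (f' := fun _ => (0:ℝ)) hgderiv hbound hconv h0mem ht
  have hgt : g t = g 0 := by
    have : ‖g t - g 0‖ ≤ 0 := by simpa using this
    have := norm_le_zero_iff.mp this
    linarith [sub_eq_zero.mp this]
  have hg0 : g 0 = 0 := by simp [hgdef, hf0]
  have : Real.exp (β * t) * f t = 0 := by rw [← hgt] at hg0; exact hg0
  have hexp : Real.exp (β * t) ≠ 0 := (Real.exp_pos _).ne'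
  have := mul_eq_zero.mp this
  rcases this with h | h
  · exact absurd h hexp
  · exact h
end
end

section
/- If x : I × [0,T] → ℝ² is smooth with |x_ρ| > 0 and satisfies x_t · τ = 0 (normal parameterization) together with x_tt + β x_t = (1/|x_ρ|)(x_ρ/|x_ρ|)_ρ − (x_t·τ_t)τ, then the length element satisfies ∂_t|x_ρ| = −|x_ρ| (x_t · x_tt) − β |x_ρ| |x_t|², where τ = x_ρ/|x_ρ|. -/
open scoped RealInnerProductSpace
open Set

noncomputable section

/-- for a smooth normal parameterization solving the hyperbolic
curvature flow system, the length element satisfies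
`∂_t|x_ρ| = −|x_ρ|(x_t·x_tt) − β|x_ρ||x_t|²`. -/
theorem length_element_evolution
    (T β : ℝ) (hT : 0 < T) (hβ : 0 ≤ β)
    (x xρ xt xtt τ τt τρ : ℝ → ℝ → E2)
    (hsmooth : ContDiff ℝ (⊤ : ℕ∞) (fun p : ℝ × ℝ => x p.1 p.2))
    (hper : ∀ ρ t, x (ρ + 1) t = x ρ t)
    (hxρ : ∀ ρ t, HasDerivAt (fun ρ' => x ρ' t) (xρ ρ t) ρ)
    (hxt : ∀ ρ t, HasDerivAt (fun t' => x ρ t') (xt ρ t) t)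
    (hxtt : ∀ ρ t, HasDerivAt (fun t' => xt ρ t') (xtt ρ t) t)
    (hpos : ∀ ρ t, 0 < ‖xρ ρ t‖)
    (hτ : ∀ ρ t, τ ρ t = ‖xρ ρ t‖⁻¹ • xρ ρ t)
    (hτt : ∀ ρ t, HasDerivAt (fun t' => τ ρ t') (τt ρ t) t)
    (hτρ : ∀ ρ t, HasDerivAt (fun ρ' => τ ρ' t) (τρ ρ t) ρ)
    (hnormal : ∀ ρ, ∀ t ∈ Icc (0:ℝ) T, ⟪xt ρ t, τ ρ t⟫ = 0)
    (hpde : ∀ ρ, ∀ t ∈ Icc (0:ℝ) T,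
      xtt ρ t + β • xt ρ t
        = ‖xρ ρ t‖⁻¹ • τρ ρ t - ⟪xt ρ t, τt ρ t⟫ • τ ρ t) :
    ∀ ρ, ∀ t ∈ Icc (0:ℝ) T,
      HasDerivAt (fun t' => ‖xρ ρ t'‖)
        (-(‖xρ ρ t‖ * ⟪xt ρ t, xtt ρ t⟫) - β * ‖xρ ρ t‖ * ‖xt ρ t‖ ^ 2) t := by
  intro ρ t ht
  set F : ℝ × ℝ → E2 := fun p => x p.1 p.2 with hF
  have hFd : Differentiable ℝ F := hsmooth.differentiable (by simp)
  have hF'd : Differentiable ℝ (fderiv ℝ F) :=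
    (hsmooth.fderiv_right (m := (⊤ : ℕ∞)) (by simp)).differentiable (by simp)
  -- identify partial derivatives
  have hxρ_eq : ∀ ρ' t', xρ ρ' t' = fderiv ℝ F (ρ', t') (1, 0) := by
    intro ρ' t'
    have hc : HasDerivAt (fun s : ℝ => (s, t')) ((1:ℝ), (0:ℝ)) ρ' :=
      HasDerivAt.prodMk (hasDerivAt_id ρ') (hasDerivAt_const _ _)
    have h2 : HasDerivAt (fun s => F (s, t')) (fderiv ℝ F (ρ', t') (1, 0)) ρ' :=
      by have := (hFd (ρ', t')).hasFDerivAt.comp_hasDerivAt ρ' hc; exact this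
    exact (hxρ ρ' t').unique h2
  have hxt_eq : ∀ ρ' t', xt ρ' t' = fderiv ℝ F (ρ', t') (0, 1) := by
    intro ρ' t'
    have hc : HasDerivAt (fun s : ℝ => (ρ', s)) ((0:ℝ), (1:ℝ)) t' :=
      HasDerivAt.prodMk (hasDerivAt_const _ _) (hasDerivAt_id t')
    have h2 : HasDerivAt (fun s => F (ρ', s)) (fderiv ℝ F (ρ', t') (0, 1)) t' :=
      (hFd (ρ', t')).hasFDerivAt.comp_hasDerivAt t' hc
    exact (hxt ρ' t').unique h2
  -- second derivative
  set f'' := fderiv ℝ (fderiv ℝ F) (ρ, t) with hf''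
  have hΦ : HasFDerivAt (fderiv ℝ F) f'' (ρ, t) := (hF'd (ρ, t)).hasFDerivAt
  have hsymm : f'' (0, 1) (1, 0) = f'' (1, 0) (0, 1) :=
    second_derivative_symmetric (fun y => (hFd y).hasFDerivAt) hΦ _ _
  set v : E2 := f'' (1, 0) (0, 1) with hv
  -- t ↦ xρ ρ t has derivative v at t
  have hxρt : HasDerivAt (fun t' => xρ ρ t') v t := by
    have hc : HasDerivAt (fun s : ℝ => (ρ, s)) ((0:ℝ), (1:ℝ)) t :=
      HasDerivAt.prodMk (hasDerivAt_const _ _) (hasDerivAt_id t)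
    have h2 : HasDerivAt (fun s => fderiv ℝ F (ρ, s)) (f'' (0, 1)) t :=
      hΦ.comp_hasDerivAt t hc
    have h3 : HasDerivAt (fun s => fderiv ℝ F (ρ, s) (1, 0))
        (f'' (0, 1) (1, 0) + fderiv ℝ F (ρ, t) 0) t :=
      h2.clm_apply (hasDerivAt_const _ _)
    have h4 : HasDerivAt (fun s => fderiv ℝ F (ρ, s) (1, 0)) v t := by
      simpa [hsymm] using h3
    exact h4.congr_of_eventuallyEq
      (Filter.Eventually.of_forall fun s => (hxρ_eq ρ s))
  -- ρ ↦ xt ρ t has derivative v at ρ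
  have hxtρ : HasDerivAt (fun ρ' => xt ρ' t) v ρ := by
    have hc : HasDerivAt (fun s : ℝ => (s, t)) ((1:ℝ), (0:ℝ)) ρ :=
      HasDerivAt.prodMk (hasDerivAt_id ρ) (hasDerivAt_const _ _)
    have h2 : HasDerivAt (fun s => fderiv ℝ F (s, t)) (f'' (1, 0)) ρ :=
      hΦ.comp_hasDerivAt ρ hc
    have h3 : HasDerivAt (fun s => fderiv ℝ F (s, t) (0, 1))
        (f'' (1, 0) (0, 1) + fderiv ℝ F (ρ, t) 0) ρ :=
      h2.clm_apply (hasDerivAt_const _ _)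
    have h4 : HasDerivAt (fun s => fderiv ℝ F (s, t) (0, 1)) v ρ := by
      simpa using h3
    exact h4.congr_of_eventuallyEq
      (Filter.Eventually.of_forall fun s => (hxt_eq s t))
  have hne : ‖xρ ρ t‖ ≠ 0 := ne_of_gt (hpos ρ t)
  -- differentiate normality in ρ : ⟪v, τ⟫ + ⟪xt, τρ⟫ = 0
  have hkey : ⟪xt ρ t, τρ ρ t⟫ + ⟪v, τ ρ t⟫ = 0 := by
    have hd : HasDerivAt (fun ρ' => ⟪xt ρ' t, τ ρ' t⟫)
        (⟪xt ρ t, τρ ρ t⟫ + ⟪v, τ ρ t⟫) ρ := hxtρ.inner ℝ (hτρ ρ t)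
    have hz : HasDerivAt (fun ρ' => ⟪xt ρ' t, τ ρ' t⟫) 0 ρ := by
      have : (fun ρ' => ⟪xt ρ' t, τ ρ' t⟫) = fun _ => (0:ℝ) :=
        funext fun ρ' => hnormal ρ' t ht
      rw [this]; exact hasDerivAt_const _ _
    exact hd.unique hz
  -- inner product of PDE with xt
  have hτxt : ⟪xt ρ t, τ ρ t⟫ = 0 := hnormal ρ t ht
  have hpde' : ⟪xt ρ t, xtt ρ t⟫ + β * ‖xt ρ t‖ ^ 2
      = ‖xρ ρ t‖⁻¹ * ⟪xt ρ t, τρ ρ t⟫ := by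
    have h := congrArg (fun w => ⟪xt ρ t, w⟫) (hpde ρ t ht)
    simp only [inner_add_right, inner_sub_right, inner_smul_right, real_inner_smul_right] at h
    rw [hτxt] at h
    rw [real_inner_self_eq_norm_sq] at h
    linarith
  have hτρxt : ⟪xt ρ t, τρ ρ t⟫
      = ‖xρ ρ t‖ * (⟪xt ρ t, xtt ρ t⟫ + β * ‖xt ρ t‖ ^ 2) := by
    rw [hpde']; field_simp
  -- derivative of the norm
  have hsq : HasDerivAt (fun t' => ⟪xρ ρ t', xρ ρ t'⟫)
      (⟪xρ ρ t, v⟫ + ⟪v, xρ ρ t⟫) t := hxρt.inner ℝ hxρt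
  have hinner_ne : ⟪xρ ρ t, xρ ρ t⟫ ≠ 0 := by
    rw [real_inner_self_eq_norm_sq]; positivity
  have hsqrt := hsq.sqrt hinner_ne
  have heq : (fun t' => Real.sqrt ⟪xρ ρ t', xρ ρ t'⟫) = fun t' => ‖xρ ρ t'‖ := by
    funext t'
    rw [real_inner_self_eq_norm_mul_norm, Real.sqrt_mul_self (norm_nonneg _)]
  rw [heq] at hsqrt
  have hval : (⟪xρ ρ t, v⟫ + ⟪v, xρ ρ t⟫) / (2 * Real.sqrt ⟪xρ ρ t, xρ ρ t⟫)
      = -(‖xρ ρ t‖ * ⟪xt ρ t, xtt ρ t⟫) - β * ‖xρ ρ t‖ * ‖xt ρ t‖ ^ 2 := by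
    have hs : Real.sqrt ⟪xρ ρ t, xρ ρ t⟫ = ‖xρ ρ t‖ := by
      rw [real_inner_self_eq_norm_mul_norm, Real.sqrt_mul_self (norm_nonneg _)]
    have hcomm : ⟪xρ ρ t, v⟫ = ⟪v, xρ ρ t⟫ := real_inner_comm _ _
    have hvτ : ⟪v, τ ρ t⟫ = -⟪xt ρ t, τρ ρ t⟫ := by linarith
    have hvxρ : ⟪v, xρ ρ t⟫ = ‖xρ ρ t‖ * ⟪v, τ ρ t⟫ := by
      rw [hτ, real_inner_smul_right]; field_simp
    rw [hs, hcomm, hvxρ, hvτ, hτρxt]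
    field_simp
    ring
  rw [hval] at hsqrt
  exact hsqrt
end
end

section
/- Suppose x : I × [0,T] → ℝ² is a smooth normal parameterization (x_t·τ = 0, |x_ρ|>0) solving x_tt + β x_t = (1/|x_ρ|)(x_ρ/|x_ρ|)_ρ − (x_t·τ_t)τ. Then the associated family of curves evolves by hyperbolic curvature flow: writing V = x_t·ν for the normal velocity and κ for the curvature (κν = (1/|x_ρ|)∂_ρ τ), one has V_t − V_s (x_t·τ) + β V = κ, i.e. ∂_t^∘ V + β V = κ where ∂_t^∘ denotes the normal time derivative. -/
open scoped RealInnerProductSpace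
open Set

noncomputable section

lemma rot_apply0 (v : E2) : rot v 0 = v 1 := rfl
lemma rot_apply1 (v : E2) : rot v 1 = -v 0 := rfl

lemma inner_e2 (a b : E2) : ⟪a, b⟫ = a 0 * b 0 + a 1 * b 1 := by
  simp [PiLp.inner_apply, Fin.sum_univ_two, mul_comm]

lemma rot_add (a b : E2) : rot (a + b) = rot a + rot b := by
  ext i
  fin_cases i <;>
    simp [rot, WithLp.equiv_symm_apply, PiLp.toLp_apply]
  ring

lemma rot_smul (c : ℝ) (a : E2) : rot (c • a) = c • rot a := by
  ext i
  fin_cases i <;> simp [rot, WithLp.equiv_symm_apply, PiLp.toLp_apply]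

def rotL : E2 →L[ℝ] E2 :=
  LinearMap.toContinuousLinearMap
    { toFun := rot
      map_add' := rot_add
      map_smul' := rot_smul }

lemma rotL_apply (v : E2) : rotL v = rot v := rfl

lemma HasDerivAt.rot {f : ℝ → E2} {f' : E2} {t : ℝ} (hf : HasDerivAt f f' t) :
    HasDerivAt (fun s => rot (f s)) (rot f') t := by
  exact rotL.hasFDerivAt.comp_hasDerivAt t hf

lemma inner_rot_self (a : E2) : ⟪a, rot a⟫ = 0 := by
  simp [inner_e2, rot_apply0, rot_apply1]; ring

lemma inner_rot_rot (a b : E2) : ⟪rot a, rot b⟫ = ⟪a, b⟫ := by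
  simp [inner_e2, rot_apply0, rot_apply1]; ring

lemma rot_rot (a : E2) : rot (rot a) = -a := by
  ext i
  fin_cases i <;> simp [rot, WithLp.equiv_symm_apply, PiLp.toLp_apply]

/-- decomposition of a vector orthogonal to a unit vector τ. -/
lemma decomp (u v : E2) (hu : ⟪u, u⟫ = 1) (h : ⟪v, u⟫ = 0) :
    v = ⟪v, rot u⟫ • rot u := by
  rw [inner_e2] at hu h
  ext i
  have hi : ⟪v, rot u⟫ = v 0 * u 1 - v 1 * u 0 := by
    simp [inner_e2, rot_apply0, rot_apply1]; ring
  fin_cases i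
  · show v 0 = ⟪v, rot u⟫ • rot u 0
    simp only [PiLp.smul_apply, smul_eq_mul, hi, rot_apply0]
    linear_combination u 0 * h - v 0 * hu
  · show v 1 = ⟪v, rot u⟫ • rot u 1
    simp only [PiLp.smul_apply, smul_eq_mul, hi, rot_apply1]
    linear_combination u 1 * h - v 1 * hu

/-- a smooth normal parameterization solving the system evolves by
hyperbolic curvature flow: with `V = x_t·ν` and `κν = (1/|x_ρ|)∂_ρτ`, one has
`V_t − V_s (x_t·τ) + β V = κ`, i.e. `∂_t^∘ V + β V = κ`. -/
theorem hyperbolic_curvature_flow_law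
    (T β : ℝ) (hT : 0 < T) (hβ : 0 ≤ β)
    (x xρ xt xtt τ τt τρ ν : ℝ → ℝ → E2) (κ : ℝ → ℝ → ℝ)
    (hsmooth : ContDiff ℝ (⊤ : ℕ∞) (fun p : ℝ × ℝ => x p.1 p.2))
    (hper : ∀ ρ t, x (ρ + 1) t = x ρ t)
    (hxρ : ∀ ρ t, HasDerivAt (fun ρ' => x ρ' t) (xρ ρ t) ρ)
    (hxt : ∀ ρ t, HasDerivAt (fun t' => x ρ t') (xt ρ t) t)
    (hxtt : ∀ ρ t, HasDerivAt (fun t' => xt ρ t') (xtt ρ t) t)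
    (hpos : ∀ ρ t, 0 < ‖xρ ρ t‖)
    (hτ : ∀ ρ t, τ ρ t = ‖xρ ρ t‖⁻¹ • xρ ρ t)
    (hν : ∀ ρ t, ν ρ t = rot (τ ρ t))
    (hτt : ∀ ρ t, HasDerivAt (fun t' => τ ρ t') (τt ρ t) t)
    (hτρ : ∀ ρ t, HasDerivAt (fun ρ' => τ ρ' t) (τρ ρ t) ρ)
    (hκ : ∀ ρ t, τρ ρ t = (‖xρ ρ t‖ * κ ρ t) • ν ρ t)
    (hnormal : ∀ ρ, ∀ t ∈ Icc (0:ℝ) T, ⟪xt ρ t, τ ρ t⟫ = 0)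
    (hpde : ∀ ρ, ∀ t ∈ Icc (0:ℝ) T,
      xtt ρ t + β • xt ρ t
        = ‖xρ ρ t‖⁻¹ • τρ ρ t - ⟪xt ρ t, τt ρ t⟫ • τ ρ t) :
    ∀ ρ, ∀ t ∈ Icc (0:ℝ) T,
      deriv (fun t' => ⟪xt ρ t', ν ρ t'⟫) t
        - ‖xρ ρ t‖⁻¹ * deriv (fun ρ' => ⟪xt ρ' t, ν ρ' t⟫) ρ * ⟪xt ρ t, τ ρ t⟫
        + β * ⟪xt ρ t, ν ρ t⟫
        = κ ρ t := by
  intro ρ t ht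
  -- τ is a unit vector
  have hunit : ∀ ρ t, ⟪τ ρ t, τ ρ t⟫ = (1:ℝ) := by
    intro ρ t
    have h0 : ‖xρ ρ t‖ ≠ 0 := ne_of_gt (hpos ρ t)
    rw [real_inner_self_eq_norm_sq, hτ, norm_smul]
    simp [abs_of_pos (inv_pos.mpr (hpos ρ t)), inv_mul_cancel₀ h0]
  -- τt ⊥ τ
  have hτtτ : ⟪τt ρ t, τ ρ t⟫ = 0 := by
    have h1 : HasDerivAt (fun t' => ⟪τ ρ t', τ ρ t'⟫)
        (⟪τ ρ t, τt ρ t⟫ + ⟪τt ρ t, τ ρ t⟫) t := (hτt ρ t).inner (𝕜 := ℝ) (hτt ρ t)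
    have h2 : HasDerivAt (fun _ : ℝ => (1:ℝ)) 0 t := hasDerivAt_const t 1
    have heq : (fun t' => ⟪τ ρ t', τ ρ t'⟫) = fun _ : ℝ => (1:ℝ) := by
      funext t'; exact hunit ρ t'
    rw [heq] at h1
    have h3 := h1.unique h2
    have h4 := real_inner_comm (τ ρ t) (τt ρ t)
    linarith
  -- derivative of V in t
  have hνt : HasDerivAt (fun t' => ν ρ t') (rot (τt ρ t)) t := by
    have := (hτt ρ t).rot
    simpa [← hν] using this
  have hVt : HasDerivAt (fun t' => ⟪xt ρ t', ν ρ t'⟫)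
      (⟪xt ρ t, rot (τt ρ t)⟫ + ⟪xtt ρ t, ν ρ t⟫) t := (hxtt ρ t).inner (𝕜 := ℝ) hνt
  -- ⟪xt, rot τt⟫ = 0
  have hτtdec : τt ρ t = ⟪τt ρ t, rot (τ ρ t)⟫ • rot (τ ρ t) :=
    decomp (τ ρ t) (τt ρ t) (hunit ρ t) hτtτ
  have hxt_rot : ⟪xt ρ t, rot (τt ρ t)⟫ = 0 := by
    rw [hτtdec, rot_smul, rot_rot, smul_neg, inner_neg_right, real_inner_smul_right,
      hnormal ρ t ht]
    ring
  -- ⟪xtt, ν⟫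
  have hττ : ⟪τ ρ t, ν ρ t⟫ = 0 := by rw [hν]; exact inner_rot_self _
  have hνν : ⟪ν ρ t, ν ρ t⟫ = 1 := by rw [hν, inner_rot_rot]; exact hunit ρ t
  have hxttν : ⟪xtt ρ t, ν ρ t⟫ = κ ρ t - β * ⟪xt ρ t, ν ρ t⟫ := by
    have hp := hpde ρ t ht
    have : xtt ρ t = ‖xρ ρ t‖⁻¹ • τρ ρ t - ⟪xt ρ t, τt ρ t⟫ • τ ρ t - β • xt ρ t := by
      rw [← hp]; abel
    rw [this, hκ]
    rw [inner_sub_left, inner_sub_left, real_inner_smul_left, real_inner_smul_left,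
      real_inner_smul_left, real_inner_smul_left, hνν, hττ]
    have h0 : ‖xρ ρ t‖ ≠ 0 := ne_of_gt (hpos ρ t)
    field_simp
    ring
  rw [hVt.deriv, hnormal ρ t ht, hxt_rot, hxttν]
  try ring
end
end

section
/- Let x ∈ C⁴(I;ℝ²) with c₀ ≤ |x_ρ| ≤ C₀ on I, and define on the uniform grid ρ_j = jh the quantities q_j = |x_j − x_{j-1}|/h. Then (q_j + q_{j+1})/2 = |x_ρ(ρ_j)| + O(h²), i.e. there exists a constant C depending only on x such that |(q_j + q_{j+1})/2 − |x_ρ(ρ_j)|| ≤ C h² for all j and all sufficiently small h. -/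
/-!
With `A = x_j - x_{j-1}` and `B = x_{j+1} - x_j`, Taylor expansion gives `B - A = O(h²)`
(second difference) and `A + B = 2h x_ρ(ρ_j) + O(h³)` (central difference). By the
parallelogram law the triangle-inequality defect satisfies
`(‖A‖ + ‖B‖ - ‖A + B‖) ‖A + B‖ ≤ ‖B - A‖²`, and `‖A + B‖ ≳ c₀ h`, so
`‖A‖ + ‖B‖ = ‖A + B‖ + O(h³) = 2h ‖x_ρ(ρ_j)‖ + O(h³)`. The constants are uniform in `j`
because the derivatives of `x` are continuous and 1-periodic, hence bounded.
-/

open scoped RealInnerProductSpace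
open Set

noncomputable section

open Function

theorem Function.Periodic.iteratedDeriv {𝕜 F : Type*} [NontriviallyNormedField 𝕜]
    [NormedAddCommGroup F] [NormedSpace 𝕜 F] {f : 𝕜 → F} {c : 𝕜} (hp : Periodic f c) (n : ℕ) :
    Periodic (_root_.iteratedDeriv n f) c := fun t => by
  simpa only [funext hp] using (congrFun (iteratedDeriv_comp_add_const n f c) t).symm

theorem ContDiff.hasDerivAt_iteratedDeriv {𝕜 F : Type*} [NontriviallyNormedField 𝕜]
    [NormedAddCommGroup F] [NormedSpace 𝕜 F] {f : 𝕜 → F} {n : WithTop ℕ∞} (hf : ContDiff 𝕜 n f)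
    {m : ℕ} (hm : m < n) (t : 𝕜) :
    HasDerivAt (iteratedDeriv m f) (iteratedDeriv (m + 1) f t) t := by
  rw [iteratedDeriv_succ]
  exact (hf.differentiable_iteratedDeriv m hm t).hasDerivAt

section Taylor

variable {E : Type*} [NormedAddCommGroup E] [NormedSpace ℝ E]

theorem Function.Periodic.exists_norm_iteratedDeriv_le {f : ℝ → E} {c : ℝ} {n : WithTop ℕ∞}
    (hp : Periodic f c) (hc : c ≠ 0) (hf : ContDiff ℝ n f) {m : ℕ} (hm : m ≤ n) :
    ∃ K, ∀ t, ‖_root_.iteratedDeriv m f t‖ ≤ K := by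
  obtain ⟨K, hK⟩ := isBounded_iff_forall_norm_le.mp
    ((hp.iteratedDeriv m).isBounded_of_continuous hc (hf.continuous_iteratedDeriv m hm))
  exact ⟨K, fun t => hK _ (mem_range_self t)⟩

variable {f f' f'' f''' : ℝ → E} {K : ℝ}

theorem norm_sub_sub_smul_le_of_norm_deriv2_le (hf : ∀ t, HasDerivAt f (f' t) t)
    (hf' : ∀ t, HasDerivAt f' (f'' t) t) (hK : ∀ t, ‖f'' t‖ ≤ K) (a b : ℝ) :
    ‖f b - f a - (b - a) • f' a‖ ≤ K * (b - a) ^ 2 := by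
  have hK₀ : 0 ≤ K := (norm_nonneg _).trans (hK a)
  have hf'_lip : ∀ t ∈ uIcc a b, ‖f' t - f' a‖ ≤ K * |b - a| := fun t ht =>
    calc ‖f' t - f' a‖ ≤ K * ‖t - a‖ :=
          (convex_uIcc a b).norm_image_sub_le_of_norm_hasDerivWithin_le
            (fun s _ => (hf' s).hasDerivWithinAt) (fun s _ => hK s) left_mem_uIcc ht
      _ ≤ K * |b - a| := mul_le_mul_of_nonneg_left (abs_sub_left_of_mem_uIcc ht) hK₀
  have hg : ∀ t, HasDerivAt (fun s => f s - s • f' a) (f' t - f' a) t := fun t =>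
    ((hf t).sub ((hasDerivAt_id t).smul_const (f' a))).congr_deriv (by rw [one_smul])
  have := (convex_uIcc a b).norm_image_sub_le_of_norm_hasDerivWithin_le
    (fun t _ => (hg t).hasDerivWithinAt) hf'_lip left_mem_uIcc right_mem_uIcc
  calc ‖f b - f a - (b - a) • f' a‖ = ‖(f b - b • f' a) - (f a - a • f' a)‖ := by
        rw [sub_smul]; congr 1; abel
    _ ≤ K * |b - a| * ‖b - a‖ := this
    _ = K * (b - a) ^ 2 := by rw [Real.norm_eq_abs, mul_assoc, ← sq, sq_abs]

theorem norm_second_difference_le (hf : ∀ t, HasDerivAt f (f' t) t)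
    (hf' : ∀ t, HasDerivAt f' (f'' t) t) (hK : ∀ t, ‖f'' t‖ ≤ K) (ρ h : ℝ) :
    ‖(f (ρ + h) - f ρ) - (f ρ - f (ρ - h))‖ ≤ 2 * K * h ^ 2 := by
  have hplus := norm_sub_sub_smul_le_of_norm_deriv2_le hf hf' hK ρ (ρ + h)
  have hminus := norm_sub_sub_smul_le_of_norm_deriv2_le hf hf' hK ρ (ρ - h)
  calc ‖(f (ρ + h) - f ρ) - (f ρ - f (ρ - h))‖
        = ‖(f (ρ + h) - f ρ - (ρ + h - ρ) • f' ρ) + (f (ρ - h) - f ρ - (ρ - h - ρ) • f' ρ)‖ := by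
          congr 1; simp only [add_sub_cancel_left, sub_sub_cancel_left, neg_smul]; abel
    _ ≤ K * (ρ + h - ρ) ^ 2 + K * (ρ - h - ρ) ^ 2 :=
        (norm_add_le _ _).trans (add_le_add hplus hminus)
    _ = 2 * K * h ^ 2 := by ring

theorem norm_central_difference_sub_le (hf : ∀ t, HasDerivAt f (f' t) t)
    (hf' : ∀ t, HasDerivAt f' (f'' t) t) (hf'' : ∀ t, HasDerivAt f'' (f''' t) t)
    (hK : ∀ t, ‖f''' t‖ ≤ K) (ρ h : ℝ) :
    ‖f (ρ + h) - f (ρ - h) - (2 * h) • f' ρ‖ ≤ 2 * K * |h| ^ 3 := by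
  set g : ℝ → E := fun t => f (ρ + t) - f (ρ - t) - (2 * t) • f' ρ
  have hg : ∀ t, HasDerivAt g ((f' (ρ + t) - f' ρ - (ρ + t - ρ) • f'' ρ)
      + (f' (ρ - t) - f' ρ - (ρ - t - ρ) • f'' ρ)) t := fun t => by
    have hplus := (hf (ρ + t)).scomp t ((hasDerivAt_id t).const_add ρ)
    have hminus := (hf (ρ - t)).scomp t ((hasDerivAt_id t).const_sub ρ)
    have hlin := ((hasDerivAt_id t).const_mul (2 : ℝ)).smul_const (f' ρ)
    refine ((hplus.sub hminus).sub hlin).congr_deriv ?_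
    module
  have hg_bound : ∀ t ∈ uIcc 0 h, ‖(f' (ρ + t) - f' ρ - (ρ + t - ρ) • f'' ρ)
      + (f' (ρ - t) - f' ρ - (ρ - t - ρ) • f'' ρ)‖ ≤ 2 * K * h ^ 2 := fun t ht => by
    have ht2 : t ^ 2 ≤ h ^ 2 := by
      simpa [sq_abs] using pow_le_pow_left₀ (abs_nonneg _) (abs_sub_left_of_mem_uIcc ht) 2
    have hK₀ : 0 ≤ K := (norm_nonneg _).trans (hK 0)
    have hplus := norm_sub_sub_smul_le_of_norm_deriv2_le hf' hf'' hK ρ (ρ + t)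
    have hminus := norm_sub_sub_smul_le_of_norm_deriv2_le hf' hf'' hK ρ (ρ - t)
    calc _ ≤ K * (ρ + t - ρ) ^ 2 + K * (ρ - t - ρ) ^ 2 :=
          (norm_add_le _ _).trans (add_le_add hplus hminus)
      _ = 2 * K * t ^ 2 := by ring
      _ ≤ 2 * K * h ^ 2 := by gcongr
  have := (convex_uIcc 0 h).norm_image_sub_le_of_norm_hasDerivWithin_le
    (fun t _ => (hg t).hasDerivWithinAt) hg_bound left_mem_uIcc right_mem_uIcc
  calc ‖f (ρ + h) - f (ρ - h) - (2 * h) • f' ρ‖ = ‖g h - g 0‖ := by simp [g]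
    _ ≤ 2 * K * h ^ 2 * ‖h - 0‖ := this
    _ = 2 * K * |h| ^ 3 := by rw [sub_zero, Real.norm_eq_abs, ← sq_abs]; ring

end Taylor

section Norms

variable {E : Type*} [NormedAddCommGroup E] [InnerProductSpace ℝ E]

theorem norm_add_norm_sub_norm_add_mul_le (A B : E) :
    (‖A‖ + ‖B‖ - ‖A + B‖) * ‖A + B‖ ≤ ‖B - A‖ ^ 2 := by
  have hpar := parallelogram_law_with_norm ℝ A B
  rw [← norm_neg (A - B), neg_sub] at hpar
  nlinarith [norm_add_le A B, norm_nonneg (A + B), sq_nonneg (‖A‖ - ‖B‖)]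

theorem abs_avg_norm_div_sub_norm_le {p₀ p₁ p₂ v : E} {h a b c : ℝ} (hh : 0 < h) (hc : 0 < c)
    (hv : c ≤ ‖v‖) (hsmall : b * h ^ 2 ≤ c)
    (hsecond : ‖(p₂ - p₁) - (p₁ - p₀)‖ ≤ a * h ^ 2)
    (hcentral : ‖p₂ - p₀ - (2 * h) • v‖ ≤ b * h ^ 3) :
    |(‖p₁ - p₀‖ / h + ‖p₂ - p₁‖ / h) / 2 - ‖v‖| ≤ (a ^ 2 / c + b) / 2 * h ^ 2 := by
  set A := p₁ - p₀
  set B := p₂ - p₁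
  have hAB : A + B = p₂ - p₀ := by simp only [A, B]; abel
  rw [← hAB] at hcentral
  have hsum : |‖A + B‖ - 2 * h * ‖v‖| ≤ b * h ^ 3 := by
    have : ‖(2 * h) • v‖ = 2 * h * ‖v‖ := by rw [norm_smul, Real.norm_of_nonneg (by positivity)]
    exact this ▸ (abs_norm_sub_norm_le _ _).trans hcentral
  have hsum_lower : c * h ≤ ‖A + B‖ := by
    nlinarith [(abs_le.mp hsum).1, mul_le_mul_of_nonneg_left hv hh.le]
  have hdefect : ‖A‖ + ‖B‖ - ‖A + B‖ ≤ a ^ 2 / c * h ^ 3 := by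
    have hdiff : ‖B - A‖ ^ 2 ≤ (a * h ^ 2) ^ 2 := pow_le_pow_left₀ (norm_nonneg _) hsecond 2
    have hmul := norm_add_norm_sub_norm_add_mul_le A B
    rw [div_mul_eq_mul_div, le_div_iff₀ hc]
    nlinarith [norm_add_le A B]
  have hnum : |‖A‖ + ‖B‖ - 2 * h * ‖v‖| ≤ (a ^ 2 / c + b) * h ^ 3 := by
    rw [abs_le] at hsum ⊢
    constructor <;> nlinarith [norm_add_le A B]
  rw [show (‖A‖ / h + ‖B‖ / h) / 2 - ‖v‖ = (‖A‖ + ‖B‖ - 2 * h * ‖v‖) / (2 * h) by field_simp,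
    abs_div, abs_of_pos (by positivity : (0 : ℝ) < 2 * h), div_le_iff₀ (by positivity)]
  linarith [hnum]

end Norms

theorem discrete_length_element_consistency_general
    (x : ℝ → E2) (c₀ : ℝ) (hc₀ : 0 < c₀)
    (hx : ContDiff ℝ 4 x)
    (hper : ∀ ρ, x (ρ + 1) = x ρ)
    (hlow : ∀ ρ, c₀ ≤ ‖deriv x ρ‖) :
    ∃ C > (0:ℝ), ∃ hstar > (0:ℝ), ∀ J : ℕ, 0 < J → (1:ℝ)/J ≤ hstar → ∀ j : ℤ,
      |(‖x (j * ((1:ℝ)/J)) - x ((j-1) * ((1:ℝ)/J))‖ / ((1:ℝ)/J)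
          + ‖x ((j+1) * ((1:ℝ)/J)) - x (j * ((1:ℝ)/J))‖ / ((1:ℝ)/J)) / 2
        - ‖deriv x (j * ((1:ℝ)/J))‖|
      ≤ C * ((1:ℝ)/J) ^ 2 := by
  have hper : Periodic x 1 := hper
  obtain ⟨K₂, hK₂⟩ := hper.exists_norm_iteratedDeriv_le one_ne_zero hx (m := 2) (by norm_num)
  obtain ⟨K₃, hK₃⟩ := hper.exists_norm_iteratedDeriv_le one_ne_zero hx (m := 3) (by norm_num)
  have hK₃₀ : 0 ≤ K₃ := (norm_nonneg _).trans (hK₃ 0)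
  have hd : ∀ m : ℕ, m < 4 → ∀ t, HasDerivAt (iteratedDeriv m x) (iteratedDeriv (m + 1) x t) t :=
    fun m hm => hx.hasDerivAt_iteratedDeriv (by exact_mod_cast hm)
  refine ⟨((2 * K₂) ^ 2 / c₀ + 2 * K₃) / 2 + 1, by positivity, min 1 (c₀ / (2 * K₃ + 1)),
    by positivity, fun J hJ hJh j => ?_⟩
  set h : ℝ := 1 / J
  have hh : 0 < h := by positivity
  have hsmall : 2 * K₃ * h ^ 2 ≤ c₀ := by
    have h1 : h ≤ 1 := hJh.trans (min_le_left _ _)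
    have h2 : h * (2 * K₃ + 1) ≤ c₀ :=
      (le_div_iff₀ (by positivity)).mp (hJh.trans (min_le_right _ _))
    calc 2 * K₃ * h ^ 2 ≤ h * (2 * K₃ + 1) := by
          nlinarith [mul_le_mul_of_nonneg_left h1 (mul_nonneg hK₃₀ hh.le)]
      _ ≤ c₀ := h2
  set ρ : ℝ := j * h
  rw [show ((j : ℝ) - 1) * h = ρ - h by ring, show ((j : ℝ) + 1) * h = ρ + h by ring,
    ← iteratedDeriv_one]
  refine (abs_avg_norm_div_sub_norm_le hh hc₀ (by simpa only [iteratedDeriv_one] using hlow ρ)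
    hsmall ?_ ?_).trans
    (mul_le_mul_of_nonneg_right (le_add_of_nonneg_right zero_le_one) (sq_nonneg h))
  · simpa only [iteratedDeriv_zero] using
      norm_second_difference_le (hd 0 (by norm_num)) (hd 1 (by norm_num)) hK₂ ρ h
  · simpa only [iteratedDeriv_zero, abs_of_pos hh] using
      norm_central_difference_sub_le (hd 0 (by norm_num)) (hd 1 (by norm_num)) (hd 2 (by norm_num))
        hK₃ ρ h

/-- second order consistency of the averaged discrete length element:
`(q_j + q_{j+1})/2 = |x_ρ(ρ_j)| + O(h²)`. -/
theorem discrete_length_element_consistency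
    (x : ℝ → E2) (c₀ C₀ : ℝ) (hc₀ : 0 < c₀) (hcC : c₀ ≤ C₀)
    (hx : ContDiff ℝ 4 x)
    (hper : ∀ ρ, x (ρ + 1) = x ρ)
    (hlow : ∀ ρ, c₀ ≤ ‖deriv x ρ‖) (hup : ∀ ρ, ‖deriv x ρ‖ ≤ C₀) :
    ∃ C > (0:ℝ), ∃ hstar > (0:ℝ), ∀ J : ℕ, 0 < J → (1:ℝ)/J ≤ hstar → ∀ j : ℤ,
      |(‖x (j * ((1:ℝ)/J)) - x ((j-1) * ((1:ℝ)/J))‖ / ((1:ℝ)/J)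
          + ‖x ((j+1) * ((1:ℝ)/J)) - x (j * ((1:ℝ)/J))‖ / ((1:ℝ)/J)) / 2
        - ‖deriv x (j * ((1:ℝ)/J))‖|
      ≤ C * ((1:ℝ)/J) ^ 2 :=
  discrete_length_element_consistency_general x c₀ hc₀ hx hper hlow
end
end

section
/- Let x^h solve the semidiscrete scheme ẍ^h_j + β ẋ^h_j = (2/(q^h_j+q^h_{j+1}))(τ^h_{j+1}−τ^h_j)/h − (ẋ^h_j·θ̇^h_j)θ^h_j with ẋ^h_j·θ^h_j = 0. Then the discrete length elements satisfy q̇^h_j + (1/4)(q^h_{j-1}+q^h_j)(ẋ^h_{j-1}·ẍ^h_{j-1} + β|ẋ^h_{j-1}|²) + (1/4)(q^h_j+q^h_{j+1})(ẋ^h_j·ẍ^h_j + β|ẋ^h_j|²) = 0 for all j and t. -/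
open scoped RealInnerProductSpace
open Set

noncomputable section

/-!
Write `J` for `1/h`. Differentiating `q_j = ‖J (x_j - x_{j-1})‖` gives
`q̇_j = J ⟪ẋ_j - ẋ_{j-1}, τ_j⟫`. Testing the scheme with `ẋ_k` kills the `θ_k` term by
orthogonality, so `(1/4)(q_k + q_{k+1})(⟪ẋ_k, ẍ_k⟫ + β‖ẋ_k‖²) = (J/2) ⟪ẋ_k, τ_{k+1} - τ_k⟫`.
Orthogonality also gives `⟪ẋ_k, τ_k⟫ = -⟪ẋ_k, τ_{k+1}⟫`; with it the two tested schemes for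
`k = j - 1` and `k = j` add up to exactly `-q̇_j`.
-/

section InnerProductSpace

variable {F : Type*} [NormedAddCommGroup F] [InnerProductSpace ℝ F]

theorem inner_eq_neg_inner_of_inner_normalize_add_eq_zero {x a b : F} (hab : a + b ≠ 0)
    (h : ⟪x, ‖a + b‖⁻¹ • (a + b)⟫ = 0) : ⟪x, a⟫ = -⟪x, b⟫ := by
  rw [real_inner_smul_right, mul_eq_zero, inv_eq_zero, norm_eq_zero, inner_add_right] at h
  linarith [h.resolve_left hab]

theorem inner_add_mul_norm_sq_of_eq_smul_sub_smul {u a w θ : F} {β c s : ℝ}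
    (h : a + β • u = c • w - s • θ) (horth : ⟪u, θ⟫ = 0) :
    ⟪u, a⟫ + β * ‖u‖ ^ 2 = c * ⟪u, w⟫ := by
  have h' := congrArg (⟪u, ·⟫) h
  simpa only [inner_add_right, inner_sub_right, real_inner_smul_right,
    real_inner_self_eq_norm_sq, horth, mul_zero, sub_zero] using h'

theorem HasDerivAt.eq_inner_normalize_of_hasDerivAt_norm {v : ℝ → F} {v' : F} {n' t : ℝ}
    (hv : HasDerivAt v v' t) (hn : HasDerivAt (‖v ·‖) n' t) (h0 : v t ≠ 0) :
    n' = ⟪v', ‖v t‖⁻¹ • v t⟫ := by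
  have hsq : 2 * ‖v t‖ ^ 1 * n' = 2 * ⟪v t, v'⟫ := (hn.pow 2).unique hv.norm_sq
  have hinner : ⟪v t, v'⟫ = ‖v t‖ * n' := by linarith
  rw [real_inner_smul_right, real_inner_comm, hinner,
    inv_mul_cancel_left₀ (norm_ne_zero_iff.mpr h0)]

end InnerProductSpace

theorem semidiscrete_length_element_evolution_general
    (J : ℕ) (Th β : ℝ)
    (xh xhd xhdd τ θ θd : ℤ → ℝ → E2) (q qd : ℤ → ℝ → ℝ)
    (hq : ∀ j t, q j t = ‖(J:ℝ) • (xh j t - xh (j-1) t)‖)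
    (hqpos : ∀ j, ∀ t ∈ Ico (0:ℝ) Th, 0 < q j t)
    (hτ : ∀ j t, τ j t = (q j t)⁻¹ • ((J:ℝ) • (xh j t - xh (j-1) t)))
    (hθwell : ∀ j, ∀ t ∈ Ico (0:ℝ) Th, τ j t + τ (j+1) t ≠ 0)
    (hθ : ∀ j t, θ j t = ‖τ j t + τ (j+1) t‖⁻¹ • (τ j t + τ (j+1) t))
    (hxhd : ∀ j t, HasDerivAt (fun t' => xh j t') (xhd j t) t)
    (hqd : ∀ j, ∀ t ∈ Ico (0:ℝ) Th, HasDerivAt (fun t' => q j t') (qd j t) t)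
    (hscheme : ∀ j, ∀ t ∈ Ico (0:ℝ) Th,
      xhdd j t + β • xhd j t
        = (2 / (q j t + q (j+1) t)) • ((J:ℝ) • (τ (j+1) t - τ j t))
          - ⟪xhd j t, θd j t⟫ • θ j t)
    (horth : ∀ j, ∀ t ∈ Ico (0:ℝ) Th, ⟪xhd j t, θ j t⟫ = 0) :
    ∀ j, ∀ t ∈ Ico (0:ℝ) Th,
      qd j t
        + (1/4) * (q (j-1) t + q j t) *
            (⟪xhd (j-1) t, xhdd (j-1) t⟫ + β * ‖xhd (j-1) t‖ ^ 2)
        + (1/4) * (q j t + q (j+1) t) *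
            (⟪xhd j t, xhdd j t⟫ + β * ‖xhd j t‖ ^ 2)
        = 0 := by
  intro j t ht
  have hqd_eq : qd j t = (J:ℝ) * (⟪xhd j t, τ j t⟫ - ⟪xhd (j-1) t, τ j t⟫) := by
    have hdiff : HasDerivAt (fun s => (J:ℝ) • (xh j s - xh (j-1) s))
        ((J:ℝ) • (xhd j t - xhd (j-1) t)) t :=
      ((hxhd j t).sub (hxhd (j-1) t)).const_smul (J:ℝ)
    have hnorm := hqd j t ht
    simp only [hq] at hnorm
    have hne : (J:ℝ) • (xh j t - xh (j-1) t) ≠ 0 := by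
      rw [← norm_ne_zero_iff, ← hq]; exact (hqpos j t ht).ne'
    rw [hdiff.eq_inner_normalize_of_hasDerivAt_norm hnorm hne, ← hq, ← hτ,
      real_inner_smul_left, inner_sub_left]
  have hsplit : ∀ k, ⟪xhd k t, τ k t⟫ = -⟪xhd k t, τ (k+1) t⟫ := fun k =>
    inner_eq_neg_inner_of_inner_normalize_add_eq_zero (hθwell k t ht) (hθ k t ▸ horth k t ht)
  have htested : ∀ k, (1/4) * (q k t + q (k+1) t) * (⟪xhd k t, xhdd k t⟫ + β * ‖xhd k t‖ ^ 2)
      = ((J:ℝ)/2) * (⟪xhd k t, τ (k+1) t⟫ - ⟪xhd k t, τ k t⟫) := fun k => by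
    have hsum : q k t + q (k+1) t ≠ 0 := by linarith [hqpos k t ht, hqpos (k+1) t ht]
    rw [inner_add_mul_norm_sq_of_eq_smul_sub_smul (hscheme k t ht) (horth k t ht),
      real_inner_smul_right, inner_sub_right]
    field_simp
    ring
  have h₁ := htested (j-1)
  have h₂ := htested j
  have hs₁ := hsplit (j-1)
  rw [sub_add_cancel] at h₁ hs₁
  linear_combination hqd_eq + h₁ + h₂ + ((J:ℝ)/2) * hsplit j - ((J:ℝ)/2) * hs₁

/-- for the semidiscrete scheme with the orthogonality property
`ẋ^h_j·θ^h_j = 0`, the discrete length elements satisfy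
`q̇^h_j + (1/4)(q^h_{j-1}+q^h_j)(ẋ^h_{j-1}·ẍ^h_{j-1} + β|ẋ^h_{j-1}|²)
       + (1/4)(q^h_j+q^h_{j+1})(ẋ^h_j·ẍ^h_j + β|ẋ^h_j|²) = 0`. -/
theorem semidiscrete_length_element_evolution
    (J : ℕ) (hJ : 2 ≤ J) (Th β : ℝ) (hTh : 0 < Th) (hβ : 0 ≤ β)
    (xh xhd xhdd τ θ θd : ℤ → ℝ → E2) (q qd : ℤ → ℝ → ℝ)
    (hper : ∀ j t, xh (j + J) t = xh j t)
    (hq : ∀ j t, q j t = ‖(J:ℝ) • (xh j t - xh (j-1) t)‖)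
    (hqpos : ∀ j, ∀ t ∈ Ico (0:ℝ) Th, 0 < q j t)
    (hτ : ∀ j t, τ j t = (q j t)⁻¹ • ((J:ℝ) • (xh j t - xh (j-1) t)))
    (hθwell : ∀ j, ∀ t ∈ Ico (0:ℝ) Th, τ j t + τ (j+1) t ≠ 0)
    (hθ : ∀ j t, θ j t = ‖τ j t + τ (j+1) t‖⁻¹ • (τ j t + τ (j+1) t))
    (hxhd : ∀ j t, HasDerivAt (fun t' => xh j t') (xhd j t) t)
    (hxhdd : ∀ j t, HasDerivAt (fun t' => xhd j t') (xhdd j t) t)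
    (hθd : ∀ j, ∀ t ∈ Ico (0:ℝ) Th, HasDerivAt (fun t' => θ j t') (θd j t) t)
    (hqd : ∀ j, ∀ t ∈ Ico (0:ℝ) Th, HasDerivAt (fun t' => q j t') (qd j t) t)
    (hscheme : ∀ j, ∀ t ∈ Ico (0:ℝ) Th,
      xhdd j t + β • xhd j t
        = (2 / (q j t + q (j+1) t)) • ((J:ℝ) • (τ (j+1) t - τ j t))
          - ⟪xhd j t, θd j t⟫ • θ j t)
    (horth : ∀ j, ∀ t ∈ Ico (0:ℝ) Th, ⟪xhd j t, θ j t⟫ = 0) :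
    ∀ j, ∀ t ∈ Ico (0:ℝ) Th,
      qd j t
        + (1/4) * (q (j-1) t + q j t) *
            (⟪xhd (j-1) t, xhdd (j-1) t⟫ + β * ‖xhd (j-1) t‖ ^ 2)
        + (1/4) * (q j t + q (j+1) t) *
            (⟪xhd j t, xhdd j t⟫ + β * ‖xhd j t‖ ^ 2)
        = 0 :=
  semidiscrete_length_element_evolution_general J Th β xh xhd xhdd τ θ θd q qd hq hqpos hτ hθwell hθ
    hxhd hqd hscheme horth
end
end

section
/- Let r₀ > 0 and define r(t) = r₀ exp(−[erf^{-1}(√(2/π) t/r₀)]²) for t in an interval around 0 where erf^{-1} is defined. Then r solves the ODE r̈ = −1/r with r(0) = r₀ and ṙ(0) = 0; equivalently, t satisfies t = √(π/2) r₀ erf(√(ln(r₀/r(t)))). -/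
open scoped RealInnerProductSpace
open Set

noncomputable section

/-- The Gauss error function `erf(z) = (2/√π) ∫₀^z e^{−u²} du`. -/
def erf (z : ℝ) : ℝ := (2 / Real.sqrt Real.pi) * ∫ u in (0:ℝ)..z, Real.exp (-u ^ 2)

/-! The map `y ↦ √(π/2) r₀ erf √(log (r₀/y))` (`timeAtRadius`) inverts `t ↦ r t`, and its
derivative is `1 / v(y)` with `v(y) = -√(2 log (r₀/y))` (`velocityAtRadius`). Hence `ṙ = v(r)`
on `(0, T)` (conservation of the energy `ṙ²/2 + log r`), and differentiating once more,
`r̈ = v'(r) ṙ = -1/r`. At `t = 0`, where `v` is not differentiable, `ṙ(0)` and `r̈(0)` are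
obtained as the one-sided limits of `ṙ` and `r̈` on `(0, T)`. -/

open Real Filter Topology

lemma erf_zero : erf 0 = 0 := by simp [erf]

lemma hasDerivAt_erf (x : ℝ) : HasDerivAt erf (2 / √π * exp (-x ^ 2)) x := by
  have hc : Continuous fun u : ℝ => exp (-u ^ 2) := by fun_prop
  exact (intervalIntegral.integral_hasDerivAt_right (hc.intervalIntegrable 0 x)
    (hc.stronglyMeasurableAtFilter _ _) hc.continuousAt).const_mul _

lemma erf_pos {x : ℝ} (hx : 0 < x) : 0 < erf x :=
  mul_pos (by positivity) <| intervalIntegral.intervalIntegral_pos_of_pos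
    ((by fun_prop : Continuous fun u : ℝ => exp (-u ^ 2)).intervalIntegrable 0 x)
    (fun _ => exp_pos _) hx

lemma erf_eq_zero_iff_of_nonneg {x : ℝ} (hx : 0 ≤ x) : erf x = 0 ↔ x = 0 := by
  refine ⟨fun h => ?_, fun h => h ▸ erf_zero⟩
  by_contra hne
  exact (erf_pos (hx.lt_of_ne' hne)).ne' h

lemma eq_of_hasDerivAt_of_tendsto_nhdsGT {f f' : ℝ → ℝ} {a b e : ℝ} (hab : a < b)
    (hf : ∀ x ∈ Ico a b, HasDerivAt f (f' x) x) (hlim : Tendsto f' (𝓝[>] a) (𝓝 e)) :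
    f' a = e := by
  have hlim' : Tendsto (deriv f) (𝓝[>] a) (𝓝 e) := by
    refine hlim.congr' ?_
    filter_upwards [Ioo_mem_nhdsGT hab] with x hx using (hf x (Ioo_subset_Ico_self hx)).deriv.symm
  have hright := hasDerivWithinAt_Ici_of_tendsto_deriv
    (fun x hx => (hf x (Ioo_subset_Ico_self hx)).differentiableAt.differentiableWithinAt)
    (hf a ⟨le_rfl, hab⟩).continuousAt.continuousWithinAt (Ioo_mem_nhdsGT hab) hlim'
  exact (uniqueDiffWithinAt_Ici a).eq_deriv _ (hf a ⟨le_rfl, hab⟩).hasDerivWithinAt hright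

lemma hasDerivAt_log_const_div {c y : ℝ} (hc : c ≠ 0) (hy : y ≠ 0) :
    HasDerivAt (fun y => log (c / y)) (-y⁻¹) y := by
  refine ((hasDerivAt_log hy).const_sub (log c)).congr_of_eventuallyEq ?_
  filter_upwards [isOpen_ne.mem_nhds hy] with z hz using log_div hc hz

def timeAtRadius (r₀ y : ℝ) : ℝ := √(π / 2) * r₀ * erf √(log (r₀ / y))

def velocityAtRadius (r₀ y : ℝ) : ℝ := -√(2 * log (r₀ / y))

section Profiles

variable {r₀ y : ℝ}

lemma log_div_pos_of_mem_Ioo (hy : y ∈ Ioo 0 r₀) : 0 < log (r₀ / y) :=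
  log_pos ((one_lt_div hy.1).2 hy.2)

lemma velocityAtRadius_neg (hy : y ∈ Ioo 0 r₀) : velocityAtRadius r₀ y < 0 :=
  neg_neg_of_pos (sqrt_pos.2 (mul_pos two_pos (log_div_pos_of_mem_Ioo hy)))

lemma hasDerivAt_timeAtRadius (hy : y ∈ Ioo 0 r₀) :
    HasDerivAt (timeAtRadius r₀) (velocityAtRadius r₀ y)⁻¹ y := by
  have hL := log_div_pos_of_mem_Ioo hy
  have hr₀ : 0 < r₀ := hy.1.trans hy.2
  have h := (((hasDerivAt_erf _).comp y ((hasDerivAt_sqrt hL.ne').comp y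
    (hasDerivAt_log_const_div hr₀.ne' hy.1.ne'))).const_mul (√(π / 2) * r₀))
  refine h.congr_deriv ?_
  have hexp : exp (-√(log (r₀ / y)) ^ 2) = y / r₀ := by
    rw [sq_sqrt hL.le, exp_neg, exp_log (div_pos hr₀ hy.1), inv_div]
  have hπ : √(π / 2) * √2 = √π := by
    rw [← sqrt_mul (by positivity), div_mul_cancel₀ _ two_ne_zero]
  simp only [Function.comp_apply]
  rw [hexp, velocityAtRadius, sqrt_mul zero_le_two]
  field_simp
  rw [← hπ, mul_right_comm, mul_div_assoc, div_self hy.1.ne', mul_one]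

lemma hasDerivAt_velocityAtRadius (hy : y ∈ Ioo 0 r₀) :
    HasDerivAt (velocityAtRadius r₀) (-1 / (y * velocityAtRadius r₀ y)) y := by
  have hL := log_div_pos_of_mem_Ioo hy
  have hr₀ : 0 < r₀ := hy.1.trans hy.2
  have h := ((hasDerivAt_sqrt (mul_pos two_pos hL).ne').comp y
    ((hasDerivAt_log_const_div hr₀.ne' hy.1.ne').const_mul 2)).neg
  refine h.congr_deriv ?_
  have := velocityAtRadius_neg hy
  unfold velocityAtRadius at this ⊢
  field_simp

end Profiles

lemma tendsto_velocityAtRadius {r₀ : ℝ} (hr₀ : r₀ ≠ 0) :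
    Tendsto (velocityAtRadius r₀) (𝓝 r₀) (𝓝 0) := by
  have hcont : ContinuousAt (velocityAtRadius r₀) r₀ := by
    unfold velocityAtRadius
    fun_prop (disch := simp [hr₀])
  simpa [velocityAtRadius, hr₀] using hcont.tendsto

lemma timeAtRadius_mul_exp_neg_sq {r₀ x t : ℝ} (hr₀ : r₀ ≠ 0) (hx : 0 ≤ x)
    (herf : erf x = √(2 / π) * t / r₀) : timeAtRadius r₀ (r₀ * exp (-x ^ 2)) = t := by
  have hπ : √(π / 2) * √(2 / π) = 1 := by
    rw [← sqrt_mul (by positivity), div_mul_div_cancel₀ two_ne_zero, div_self pi_ne_zero, sqrt_one]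
  rw [timeAtRadius, div_mul_cancel_left₀ hr₀, ← exp_neg, neg_neg, log_exp, sqrt_sq hx, herf]
  field_simp
  linear_combination t * hπ

lemma mul_exp_neg_sq_mem_Ioo {r₀ x : ℝ} (hr₀ : 0 < r₀) (hx : x ≠ 0) :
    r₀ * exp (-x ^ 2) ∈ Ioo 0 r₀ :=
  ⟨by positivity, mul_lt_of_lt_one_right hr₀ (exp_lt_one_iff.2 (by simpa [sq_pos_iff] using hx))⟩

section RadialMotion

variable {r r' r'' : ℝ → ℝ} {r₀ t T : ℝ}

lemma velocity_eq_velocityAtRadius {v : ℝ} (hrt : r t ∈ Ioo 0 r₀) (hr : HasDerivAt r v t)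
    (htime : ∀ᶠ u in 𝓝 t, timeAtRadius r₀ (r u) = u) : v = velocityAtRadius r₀ (r t) := by
  have hone := ((hasDerivAt_timeAtRadius hrt).comp t hr).unique
    ((hasDerivAt_id t).congr_of_eventuallyEq htime)
  have hne := (velocityAtRadius_neg hrt).ne
  field_simp at hone
  exact hone

lemma acceleration_eq_neg_inv {a : ℝ} (hrt : r t ∈ Ioo 0 r₀) (hr : HasDerivAt r (r' t) t)
    (hr' : HasDerivAt r' a t) (hvel : r' =ᶠ[𝓝 t] velocityAtRadius r₀ ∘ r) : a = -1 / r t := by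
  have h := hr'.unique (((hasDerivAt_velocityAtRadius hrt).comp t hr).congr_of_eventuallyEq hvel)
  have hne := (velocityAtRadius_neg hrt).ne
  rw [h, hvel.eq_of_nhds, Function.comp_apply]
  field_simp

lemma velocity_acceleration_at_zero (hT : 0 < T) (hr₀ : r₀ ≠ 0) (hr0 : r 0 = r₀)
    (hr' : ∀ t ∈ Ico 0 T, HasDerivAt r (r' t) t) (hr'' : ∀ t ∈ Ico 0 T, HasDerivAt r' (r'' t) t)
    (hvel : ∀ t ∈ Ioo 0 T, r' t = velocityAtRadius r₀ (r t))
    (hacc : ∀ t ∈ Ioo 0 T, r'' t = -1 / r t) :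
    r' 0 = 0 ∧ r'' 0 = -1 / r 0 := by
  have hr_tendsto : Tendsto r (𝓝[>] 0) (𝓝 r₀) :=
    hr0 ▸ (hr' 0 ⟨le_rfl, hT⟩).continuousAt.tendsto.mono_left nhdsWithin_le_nhds
  refine ⟨eq_of_hasDerivAt_of_tendsto_nhdsGT hT hr' ?_,
    eq_of_hasDerivAt_of_tendsto_nhdsGT hT hr'' ?_⟩
  · refine ((tendsto_velocityAtRadius hr₀).comp hr_tendsto).congr' ?_
    filter_upwards [Ioo_mem_nhdsGT hT] with u hu using (hvel u hu).symm
  · refine (hr0 ▸ tendsto_const_nhds.div hr_tendsto hr₀).congr' ?_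
    filter_upwards [Ioo_mem_nhdsGT hT] with u hu using (hacc u hu).symm

end RadialMotion

/-- `r(t) = r₀ exp(−[erf⁻¹(√(2/π) t/r₀)]²)` solves `r̈ = −1/r` with
`r(0) = r₀`, `ṙ(0) = 0`; equivalently `t = √(π/2) r₀ erf(√(ln(r₀/r(t))))`. -/
theorem shrinking_circle_solution
    (T r₀ : ℝ) (hT : 0 < T) (hr₀ : 0 < r₀)
    (erfinv : ℝ → ℝ)
    (herfinv : ∀ s ∈ Ico (0:ℝ) 1, erf (erfinv s) = s ∧ 0 ≤ erfinv s)
    (r r' r'' : ℝ → ℝ)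
    (hdom : ∀ t ∈ Ico (0:ℝ) T, Real.sqrt (2 / Real.pi) * t / r₀ ∈ Ico (0:ℝ) 1)
    (hrdef : ∀ t ∈ Ico (0:ℝ) T,
      r t = r₀ * Real.exp (-(erfinv (Real.sqrt (2 / Real.pi) * t / r₀)) ^ 2))
    (hr' : ∀ t ∈ Ico (0:ℝ) T, HasDerivAt r (r' t) t)
    (hr'' : ∀ t ∈ Ico (0:ℝ) T, HasDerivAt r' (r'' t) t) :
    (∀ t ∈ Ico (0:ℝ) T, r'' t = -1 / r t) ∧
    r 0 = r₀ ∧ r' 0 = 0 ∧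
    (∀ t ∈ Ico (0:ℝ) T,
      t = Real.sqrt (Real.pi / 2) * r₀ * erf (Real.sqrt (Real.log (r₀ / r t)))) := by
  have hinv t (ht : t ∈ Ico 0 T) := herfinv _ (hdom t ht)
  have htime : ∀ t ∈ Ico 0 T, timeAtRadius r₀ (r t) = t := fun t ht => by
    rw [hrdef t ht, timeAtRadius_mul_exp_neg_sq hr₀.ne' (hinv t ht).2 (hinv t ht).1]
  have hr0 : r 0 = r₀ := by
    have h0 := hinv 0 ⟨le_rfl, hT⟩
    rw [hrdef 0 ⟨le_rfl, hT⟩, ((erf_eq_zero_iff_of_nonneg h0.2).1 (by simpa using h0.1))]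
    simp
  have hmem : ∀ t ∈ Ioo 0 T, r t ∈ Ioo 0 r₀ := fun t ht => by
    have h := hinv t (Ioo_subset_Ico_self ht)
    rw [hrdef t (Ioo_subset_Ico_self ht)]
    refine mul_exp_neg_sq_mem_Ioo hr₀ fun h0 => ?_
    rw [h0, erf_zero] at h
    exact (div_pos (mul_pos (sqrt_pos.2 (by positivity)) ht.1) hr₀).ne h.1
  have hvel : ∀ t ∈ Ioo 0 T, r' t = velocityAtRadius r₀ (r t) := fun t ht =>
    velocity_eq_velocityAtRadius (hmem t ht) (hr' t (Ioo_subset_Ico_self ht)) <| by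
      filter_upwards [Ioo_mem_nhds ht.1 ht.2] with u hu using htime u (Ioo_subset_Ico_self hu)
  have hacc : ∀ t ∈ Ioo 0 T, r'' t = -1 / r t := fun t ht =>
    acceleration_eq_neg_inv (hmem t ht) (hr' t (Ioo_subset_Ico_self ht))
      (hr'' t (Ioo_subset_Ico_self ht)) <| by
      filter_upwards [Ioo_mem_nhds ht.1 ht.2] with u hu using hvel u hu
  obtain ⟨hr'0, hr''0⟩ := velocity_acceleration_at_zero hT hr₀.ne' hr0 hr' hr'' hvel hacc
  refine ⟨fun t ht => ?_, hr0, hr'0, fun t ht => (htime t ht).symm⟩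
  rcases ht.1.eq_or_lt with rfl | hpos
  · exact hr''0
  · exact hacc t ⟨hpos, ht.2⟩
end
end

section
/- Let e_j : [0,T] → ℝ², j = 1,…,J (with periodic indexing e_0 = e_J), and let τ_j, τ^h_j : [0,T] → ℝ² be differentiable with δx^h_j = q^h_j τ^h_j, |τ_j| = |τ^h_j| = 1, e_j = x_j − x^h_j, δe_j = q_j(τ_j − τ^h_j) + (q_j − q^h_j)τ^h_j where δx_j = q_j τ_j. Then the summation-by-parts identity holds: −h Σ_{j=1}^J [(τ_{j+1}−τ^h_{j+1})−(τ_j−τ^h_j)]/h · ė_j = (1/2) h d/dt Σ_{j=1}^J q^h_j |τ_j − τ^h_j|² + h Σ_{j=1}^J [ ((q_j−q^h_j)/q_j) δẋ_j·(τ_j−τ^h_j) + (1/2)(q^h_j/q_j)(δẋ_j·τ_j)|τ_j−τ^h_j|² ]. -/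
open scoped RealInnerProductSpace
open Set

noncomputable section

/-!
Write each difference quotient `u j = J • (x j - x (j-1))` in polar form `q j • τ j`, `‖τ j‖ = 1`.
Differentiating gives `q̇ = ⟪u̇, τ⟫` and `q • τ̇ = u̇ - ⟪u̇, τ⟫ • τ`, and for unit vectors
`⟪τ - τh, τ⟫ = ‖τ - τh‖² / 2 = -⟪τ - τh, τh⟫`; with these the derivative of `qh j * ‖τ j - τh j‖²`
becomes `2 ⟪τ j - τh j, δė j⟫` minus the two correction terms. Summing over one period and moving
the difference quotient from `ė` onto `τ - τh` by periodic summation by parts gives the identity.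
-/

open Finset Function

section

variable {E : Type*} [NormedAddCommGroup E] [InnerProductSpace ℝ E] {t : ℝ}

theorem HasDerivAt.norm {u : ℝ → E} {u' : E} (hu : HasDerivAt u u' t) (h0 : u t ≠ 0) :
    HasDerivAt (fun s => ‖u s‖) (⟪u t, u'⟫ / ‖u t‖) t := by
  have h := hu.norm_sq.sqrt (by positivity)
  simp only [Real.sqrt_sq (norm_nonneg _)] at h
  convert h using 1
  field_simp

theorem hasDerivAt_polar_radius {u : ℝ → E} {u' : E} {q : ℝ → ℝ} {τ : ℝ → E}
    (hu : HasDerivAt u u' t) (hq : ∀ s, q s = ‖u s‖) (hτ : τ t = (q t)⁻¹ • u t)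
    (h0 : q t ≠ 0) : HasDerivAt q ⟪u', τ t⟫ t := by
  obtain rfl : q = fun s => ‖u s‖ := funext hq
  convert hu.norm (norm_ne_zero_iff.mp h0) using 1
  rw [hτ, real_inner_smul_right, real_inner_comm, div_eq_inv_mul]

theorem hasDerivAt_polar_direction {u : ℝ → E} {u' : E} {q : ℝ → ℝ} {τ : ℝ → E}
    (hu : HasDerivAt u u' t) (hq : ∀ s, q s = ‖u s‖) (hτ : ∀ s, τ s = (q s)⁻¹ • u s)
    (h0 : q t ≠ 0) : HasDerivAt τ ((q t)⁻¹ • (u' - ⟪u', τ t⟫ • τ t)) t := by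
  have hu_eq : u t = q t • τ t := by rw [hτ, smul_inv_smul₀ h0]
  have h := ((hasDerivAt_polar_radius hu hq (hτ t) h0).inv h0).smul hu
  rw [show q⁻¹ • u = τ from funext fun s => (hτ s).symm, Pi.inv_apply, hu_eq] at h
  convert h using 1
  match_scalars <;> field_simp

theorem norm_inv_smul_eq_one {u : E} {q : ℝ} (hq : q = ‖u‖) (h0 : q ≠ 0) : ‖q⁻¹ • u‖ = 1 := by
  subst hq
  exact norm_smul_inv_norm (𝕜 := ℝ) (norm_ne_zero_iff.mp h0)

theorem inner_sub_left_eq_half_norm_sub_sq {a b : E} (ha : ‖a‖ = 1) (hb : ‖b‖ = 1) :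
    ⟪a - b, a⟫ = ‖a - b‖ ^ 2 / 2 := by
  rw [inner_sub_left, real_inner_self_eq_norm_sq, norm_sub_sq_real, ha, hb, real_inner_comm]
  ring

theorem hasDerivAt_mul_norm_sub_sq {a b : ℝ → E} {Q : ℝ} {Qh : ℝ → ℝ} {v' w' : E}
    (ha : HasDerivAt a (Q⁻¹ • (v' - ⟪v', a t⟫ • a t)) t)
    (hb : HasDerivAt b ((Qh t)⁻¹ • (w' - ⟪w', b t⟫ • b t)) t)
    (hQh : HasDerivAt Qh ⟪w', b t⟫ t)
    (hna : ‖a t‖ = 1) (hnb : ‖b t‖ = 1) (hQ : Q ≠ 0) (hQh0 : Qh t ≠ 0) :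
    HasDerivAt (fun s => Qh s * ‖a s - b s‖ ^ 2)
      (2 * (⟪a t - b t, v' - w'⟫ - ((Q - Qh t) / Q * ⟪v', a t - b t⟫
        + 1 / 2 * (Qh t / Q) * ⟪v', a t⟫ * ‖a t - b t‖ ^ 2))) t := by
  refine (hQh.mul (ha.sub hb).norm_sq).congr_deriv ?_
  have hda := inner_sub_left_eq_half_norm_sub_sq hna hnb
  have hdb : ⟪a t - b t, b t⟫ = -(‖a t - b t‖ ^ 2 / 2) := by
    rw [← norm_sub_rev, ← inner_sub_left_eq_half_norm_sub_sq hnb hna, ← inner_neg_left, neg_sub]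
  rw [real_inner_comm (a t - b t) v']
  simp only [Pi.sub_apply, inner_sub_right, real_inner_smul_right, hda, hdb]
  field_simp
  ring

theorem hasDerivAt_polar_mul_norm_sub_sq {u uh : ℝ → E} {u' uh' : E} {q qh : ℝ → ℝ}
    {τ τh : ℝ → E} (hu : HasDerivAt u u' t) (huh : HasDerivAt uh uh' t)
    (hq : ∀ s, q s = ‖u s‖) (hτ : ∀ s, τ s = (q s)⁻¹ • u s)
    (hqh : ∀ s, qh s = ‖uh s‖) (hτh : ∀ s, τh s = (qh s)⁻¹ • uh s)
    (hq0 : q t ≠ 0) (hqh0 : qh t ≠ 0) :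
    HasDerivAt (fun s => qh s * ‖τ s - τh s‖ ^ 2)
      (2 * (⟪τ t - τh t, u' - uh'⟫ - ((q t - qh t) / q t * ⟪u', τ t - τh t⟫
        + 1 / 2 * (qh t / q t) * ⟪u', τ t⟫ * ‖τ t - τh t‖ ^ 2))) t :=
  hasDerivAt_mul_norm_sub_sq (hasDerivAt_polar_direction hu hq hτ hq0)
    (hasDerivAt_polar_direction huh hqh hτh hqh0) (hasDerivAt_polar_radius huh hqh (hτh t) hqh0)
    (hτ t ▸ norm_inv_smul_eq_one (hq t) hq0) (hτh t ▸ norm_inv_smul_eq_one (hqh t) hqh0) hq0 hqh0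

theorem Function.Periodic.sum_Icc_add_one {M : Type*} [AddCancelCommMonoid M] {f : ℤ → M} {N : ℕ}
    (hf : Periodic f N) : ∑ j ∈ Icc 1 (N : ℤ), f (j + 1) = ∑ j ∈ Icc 1 (N : ℤ), f j := by
  have hN : (1 : ℤ) ≤ N + 1 := by omega
  have hsplit := congrArg (∑ j ∈ ·, f j)
    ((Finset.insert_Icc_add_one_left_eq_Icc hN).trans
      (Finset.insert_Icc_right_eq_Icc_add_one hN).symm)
  rw [sum_insert (by simp), sum_insert (by simp), add_comm (N : ℤ), hf 1,
    add_left_cancel_iff] at hsplit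
  rw [← hsplit, add_comm (1 : ℤ) N, ← map_add_right_Icc, sum_map]
  rfl

theorem sum_Icc_inner_by_parts_of_periodic {w e : ℤ → E} {N : ℕ} (hw : Periodic w N)
    (he : Periodic e N) :
    ∑ j ∈ Icc 1 (N : ℤ), ⟪w (j + 1) - w j, e j⟫ = -∑ j ∈ Icc 1 (N : ℤ), ⟪w j, e j - e (j - 1)⟫ := by
  have hshift := Periodic.sum_Icc_add_one (N := N) (f := fun j => ⟪w j, e (j - 1)⟫) fun j => by
    simp only [hw j, add_sub_right_comm, he (j - 1)]
  simp only [add_sub_cancel_right] at hshift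
  simp only [inner_sub_left, inner_sub_right, sum_sub_distrib, hshift]
  abel

theorem periodic_of_hasDerivAt {F : Type*} [NormedAddCommGroup F] [NormedSpace ℝ F]
    {x x' : ℤ → ℝ → F} {N : ℤ} (hx : ∀ j s, x (j + N) s = x j s)
    (hx' : ∀ j, HasDerivAt (x j) (x' j t) t) : Periodic (fun j => x' j t) N := fun j =>
  (funext (hx j) ▸ hx' (j + N) : HasDerivAt (x j) (x' (j + N) t) t).unique (hx' j)

end

theorem summation_by_parts_identity_general
    (J : ℕ) (T : ℝ)
    (x xh xd xhd : ℤ → ℝ → E2) (q qh : ℤ → ℝ → ℝ) (τ τh : ℤ → ℝ → E2)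
    (hperx : ∀ j t, x (j + J) t = x j t)
    (hperxh : ∀ j t, xh (j + J) t = xh j t)
    (hq : ∀ j t, q j t = ‖(J:ℝ) • (x j t - x (j-1) t)‖)
    (hqh : ∀ j t, qh j t = ‖(J:ℝ) • (xh j t - xh (j-1) t)‖)
    (hqpos : ∀ j, ∀ t ∈ Icc (0:ℝ) T, 0 < q j t)
    (hqhpos : ∀ j, ∀ t ∈ Icc (0:ℝ) T, 0 < qh j t)
    (hτ : ∀ j t, τ j t = (q j t)⁻¹ • ((J:ℝ) • (x j t - x (j-1) t)))
    (hτh : ∀ j t, τh j t = (qh j t)⁻¹ • ((J:ℝ) • (xh j t - xh (j-1) t)))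
    (hxd : ∀ j t, HasDerivAt (fun t' => x j t') (xd j t) t)
    (hxhd : ∀ j t, HasDerivAt (fun t' => xh j t') (xhd j t) t) :
    ∀ t ∈ Icc (0:ℝ) T,
      HasDerivAt
        (fun s => (1/2) * (1/(J:ℝ)) *
          ∑ j ∈ Finset.Icc (1:ℤ) (J:ℤ), qh j s * ‖τ j s - τh j s‖ ^ 2)
        (-(1/(J:ℝ)) * ∑ j ∈ Finset.Icc (1:ℤ) (J:ℤ),
            ⟪(J:ℝ) • ((τ (j+1) t - τh (j+1) t) - (τ j t - τh j t)),
              xd j t - xhd j t⟫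
          - (1/(J:ℝ)) * ∑ j ∈ Finset.Icc (1:ℤ) (J:ℤ),
            (((q j t - qh j t) / q j t) *
                ⟪(J:ℝ) • (xd j t - xd (j-1) t), τ j t - τh j t⟫
              + (1/2) * (qh j t / q j t) *
                ⟪(J:ℝ) • (xd j t - xd (j-1) t), τ j t⟫ * ‖τ j t - τh j t‖ ^ 2)) t := by
  intro t ht
  have hder := fun j => hasDerivAt_polar_mul_norm_sub_sq
    (((hxd j t).sub (hxd (j-1) t)).const_smul (J:ℝ))
    (((hxhd j t).sub (hxhd (j-1) t)).const_smul (J:ℝ))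
    (hq j) (hτ j) (hqh j) (hτh j) (hqpos j t ht).ne' (hqhpos j t ht).ne'
  refine ((HasDerivAt.fun_sum fun j _ => hder j).const_mul (1 / 2 * (1 / (J:ℝ)))).congr_deriv ?_
  have hw : Periodic (fun j => τ j t - τh j t) J := fun j => by
    simp only [hτ, hq, hτh, hqh, add_sub_right_comm, hperx, hperxh]
  have he : Periodic (fun j => xd j t - xhd j t) J := fun j => by
    simp only [periodic_of_hasDerivAt hperx (hxd · t) j, periodic_of_hasDerivAt hperxh (hxhd · t) j]
  have hsbp := sum_Icc_inner_by_parts_of_periodic hw he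
  have hdiff : ∀ j, (J:ℝ) • (xd j t - xd (j-1) t) - (J:ℝ) • (xhd j t - xhd (j-1) t)
      = (J:ℝ) • ((xd j t - xhd j t) - (xd (j-1) t - xhd (j-1) t)) := fun j => by
    rw [← smul_sub, sub_sub_sub_comm]
  simp only [hdiff, real_inner_smul_left, real_inner_smul_right, mul_sub, sum_sub_distrib,
    ← mul_sum, hsbp]
  ring

/-- the summation-by-parts identity used in the error analysis:
`−h Σ_j [(τ_{j+1}−τ^h_{j+1})−(τ_j−τ^h_j)]/h · ė_j
  = (1/2) h d/dt Σ_j q^h_j |τ_j−τ^h_j|²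
    + h Σ_j [ ((q_j−q^h_j)/q_j) δẋ_j·(τ_j−τ^h_j)
              + (1/2)(q^h_j/q_j)(δẋ_j·τ_j)|τ_j−τ^h_j|² ]`. -/
theorem summation_by_parts_identity
    (J : ℕ) (hJ : 2 ≤ J) (T : ℝ) (hT : 0 < T)
    (x xh xd xhd : ℤ → ℝ → E2) (q qh : ℤ → ℝ → ℝ) (τ τh : ℤ → ℝ → E2)
    (hperx : ∀ j t, x (j + J) t = x j t)
    (hperxh : ∀ j t, xh (j + J) t = xh j t)
    (hq : ∀ j t, q j t = ‖(J:ℝ) • (x j t - x (j-1) t)‖)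
    (hqh : ∀ j t, qh j t = ‖(J:ℝ) • (xh j t - xh (j-1) t)‖)
    (hqpos : ∀ j, ∀ t ∈ Icc (0:ℝ) T, 0 < q j t)
    (hqhpos : ∀ j, ∀ t ∈ Icc (0:ℝ) T, 0 < qh j t)
    (hτ : ∀ j t, τ j t = (q j t)⁻¹ • ((J:ℝ) • (x j t - x (j-1) t)))
    (hτh : ∀ j t, τh j t = (qh j t)⁻¹ • ((J:ℝ) • (xh j t - xh (j-1) t)))
    (hxd : ∀ j t, HasDerivAt (fun t' => x j t') (xd j t) t)
    (hxhd : ∀ j t, HasDerivAt (fun t' => xh j t') (xhd j t) t) :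
    ∀ t ∈ Icc (0:ℝ) T,
      HasDerivAt
        (fun s => (1/2) * (1/(J:ℝ)) *
          ∑ j ∈ Finset.Icc (1:ℤ) (J:ℤ), qh j s * ‖τ j s - τh j s‖ ^ 2)
        (-(1/(J:ℝ)) * ∑ j ∈ Finset.Icc (1:ℤ) (J:ℤ),
            ⟪(J:ℝ) • ((τ (j+1) t - τh (j+1) t) - (τ j t - τh j t)),
              xd j t - xhd j t⟫
          - (1/(J:ℝ)) * ∑ j ∈ Finset.Icc (1:ℤ) (J:ℤ),
            (((q j t - qh j t) / q j t) *
                ⟪(J:ℝ) • (xd j t - xd (j-1) t), τ j t - τh j t⟫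
              + (1/2) * (qh j t / q j t) *
                ⟪(J:ℝ) • (xd j t - xd (j-1) t), τ j t⟫ * ‖τ j t - τh j t‖ ^ 2)) t :=
  summation_by_parts_identity_general J T x xh xd xhd q qh τ τh hperx hperxh hq hqh hqpos hqhpos hτ
    hτh hxd hxhd
end
end
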